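/- If f : X → Y is an open perfect (closed, continuous, with compact fibers) surjection and Y is star-K-Scheepers, then X is star-K-Scheepers. -/

import Mathlib

/-!
Pull the covers back along `f`. Given an open cover `𝒰` of `X`, every `y : Y` has an open
neighbourhood `V` such that each point of `f ⁻¹' V` lies in some `U ∈ 𝒰` with `V ⊆ f '' U`:
cover the compact fibre over `y` by finitely many members of `𝒰` that meet it, and shrink `V`
into their images (open, as `f` is open) and into the set of points whose fibre stays inside
their union (a neighbourhood, as `f` is closed). For the open cover `𝒱` of such `V`, the preimage
of a star `St(K, 𝒱)` lies in `St(f⁻¹ K, 𝒰)`, and `f⁻¹ K` is compact as `f` is perfect. So the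
compact sets `K n` that `Y` produces for the covers `𝒱 n` pull back to compact sets for `𝒰 n`.
-/

open Set

/-- Star of a set `A` with respect to a family `P`: `St(A,P) = ⋃{B ∈ P : A ∩ B ≠ ∅}`. -/
def st {X : Type*} (A : Set X) (P : Set (Set X)) : Set X :=
  ⋃₀ {B | B ∈ P ∧ (A ∩ B).Nonempty}

/-- `U` is an open cover of the space. -/
def IsOpenCover {X : Type*} [TopologicalSpace X] (U : Set (Set X)) : Prop :=
  (∀ V ∈ U, IsOpen V) ∧ ⋃₀ U = Set.univ

/-- An ω-cover: an open cover such that every finite subset lies in some member. -/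
def IsOmegaCover {X : Type*} [TopologicalSpace X] (U : Set (Set X)) : Prop :=
  IsOpenCover U ∧ ∀ F : Set X, F.Finite → ∃ V ∈ U, F ⊆ V

/-- The star-K-Scheepers property. -/
def StarKScheepers (X : Type*) [TopologicalSpace X] : Prop :=
  ∀ U : ℕ → Set (Set X), (∀ n, IsOpenCover (U n)) →
    ∃ K : ℕ → Set X, (∀ n, IsCompact (K n)) ∧
      IsOmegaCover {S | ∃ n, S = st (K n) (U n)}

section

variable {X Y : Type*}

theorem isOpen_st [TopologicalSpace X] {P : Set (Set X)} (hP : ∀ B ∈ P, IsOpen B) (A : Set X) :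
    IsOpen (st A P) :=
  isOpen_sUnion fun B hB => hP B hB.1

theorem isOmegaCover_of_finite_subset [TopologicalSpace X] {U : Set (Set X)}
    (hU : ∀ V ∈ U, IsOpen V) (hfin : ∀ F : Set X, F.Finite → ∃ V ∈ U, F ⊆ V) :
    IsOmegaCover U := by
  refine ⟨⟨hU, eq_univ_of_forall fun x => ?_⟩, hfin⟩
  obtain ⟨V, hVU, hxV⟩ := hfin {x} (finite_singleton x)
  exact ⟨V, hVU, hxV rfl⟩

theorem preimage_st_subset {f : X → Y} {𝒰 : Set (Set X)} {𝒱 : Set (Set Y)}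
    (h𝒱 : ∀ V ∈ 𝒱, ∀ x ∈ f ⁻¹' V, ∃ U ∈ 𝒰, x ∈ U ∧ V ⊆ f '' U) (K : Set Y) :
    f ⁻¹' st K 𝒱 ⊆ st (f ⁻¹' K) 𝒰 := by
  rintro x ⟨V, ⟨hV𝒱, y, hyK, hyV⟩, hxV⟩
  obtain ⟨U, hU𝒰, hxU, hVU⟩ := h𝒱 V hV𝒱 x hxV
  obtain ⟨u, huU, rfl⟩ := hVU hyV
  exact ⟨U, ⟨hU𝒰, u, hyK, huU⟩, hxU⟩

theorem exists_isOpen_mem_forall_preimage_subset_image [TopologicalSpace X] [TopologicalSpace Y]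
    {f : X → Y} (hopen : IsOpenMap f) (hclosed : IsClosedMap f)
    (hfib : ∀ y : Y, IsCompact (f ⁻¹' {y})) {𝒰 : Set (Set X)} (h𝒰 : IsOpenCover 𝒰) (y : Y) :
    ∃ V, IsOpen V ∧ y ∈ V ∧ ∀ x ∈ f ⁻¹' V, ∃ U ∈ 𝒰, x ∈ U ∧ V ⊆ f '' U := by
  have hcover : f ⁻¹' {y} ⊆ ⋃ U ∈ {U ∈ 𝒰 | (f ⁻¹' {y} ∩ U).Nonempty}, id U := by
    intro x hx
    obtain ⟨U, hU𝒰, hxU⟩ : x ∈ ⋃₀ 𝒰 := h𝒰.2 ▸ mem_univ x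
    exact mem_biUnion ⟨hU𝒰, x, hx, hxU⟩ hxU
  obtain ⟨t, ht𝒰, htfin, hyt⟩ :=
    (hfib y).elim_finite_subcover_image (fun U hU => h𝒰.1 U hU.1) hcover
  have hfibre : ∀ᶠ y' in nhds y, ∀ x ∈ f ⁻¹' {y'}, x ∈ ⋃ U ∈ t, id U :=
    hclosed.eventually_nhds_fiber y fun x hx =>
      (isOpen_biUnion fun U hU => h𝒰.1 U (ht𝒰 hU).1).mem_nhds (hyt hx)
  have himage : ∀ᶠ y' in nhds y, ∀ U ∈ t, y' ∈ f '' U := by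
    refine (Filter.eventually_all_finite htfin).2 fun U hU => ?_
    obtain ⟨x, rfl, hxU⟩ := (ht𝒰 hU).2
    exact (hopen U (h𝒰.1 U (ht𝒰 hU).1)).mem_nhds (mem_image_of_mem f hxU)
  obtain ⟨V, hV, hVopen, hyV⟩ := eventually_nhds_iff.1 (hfibre.and himage)
  refine ⟨V, hVopen, hyV, fun x hx => ?_⟩
  obtain ⟨U, hUt, hxU⟩ := mem_iUnion₂.1 ((hV (f x) hx).1 x rfl)
  exact ⟨U, (ht𝒰 hUt).1, hxU, fun y' hy' => (hV y' hy').2 U hUt⟩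

theorem exists_isOpenCover_preimage_st_subset [TopologicalSpace X] [TopologicalSpace Y]
    {f : X → Y} (hopen : IsOpenMap f) (hclosed : IsClosedMap f)
    (hfib : ∀ y : Y, IsCompact (f ⁻¹' {y})) {𝒰 : Set (Set X)} (h𝒰 : IsOpenCover 𝒰) :
    ∃ 𝒱 : Set (Set Y), IsOpenCover 𝒱 ∧ ∀ K, f ⁻¹' st K 𝒱 ⊆ st (f ⁻¹' K) 𝒰 := by
  refine ⟨{V | IsOpen V ∧ ∀ x ∈ f ⁻¹' V, ∃ U ∈ 𝒰, x ∈ U ∧ V ⊆ f '' U},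
    ⟨fun V hV => hV.1, eq_univ_of_forall fun y => ?_⟩, preimage_st_subset fun V hV => hV.2⟩
  obtain ⟨V, hVopen, hyV, hV⟩ :=
    exists_isOpen_mem_forall_preimage_subset_image hopen hclosed hfib h𝒰 y
  exact ⟨V, ⟨hVopen, hV⟩, hyV⟩

end

theorem starKScheepers_open_perfect_preimage_general {X Y : Type*} [TopologicalSpace X]
    [TopologicalSpace Y] (f : X → Y) (hcont : Continuous f) (hopen : IsOpenMap f)
    (hclosed : IsClosedMap f) (hfib : ∀ y : Y, IsCompact (f ⁻¹' {y}))
    (hY : StarKScheepers Y) :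
    StarKScheepers X := by
  intro 𝒰 h𝒰
  choose 𝒱 h𝒱 hst using fun n => exists_isOpenCover_preimage_st_subset hopen hclosed hfib (h𝒰 n)
  obtain ⟨K, hK, -, hω⟩ := hY 𝒱 h𝒱
  have hproper : IsProperMap f :=
    isProperMap_iff_isClosedMap_and_compact_fibers.2 ⟨hcont, hclosed, hfib⟩
  refine ⟨fun n => f ⁻¹' K n, fun n => hproper.isCompact_preimage (hK n),
    isOmegaCover_of_finite_subset ?_ fun F hF => ?_⟩
  · rintro _ ⟨n, rfl⟩
    exact isOpen_st (h𝒰 n).1 _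
  · obtain ⟨_, ⟨n, rfl⟩, hFn⟩ := hω (f '' F) (hF.image f)
    exact ⟨_, ⟨n, rfl⟩, fun x hx => hst n (K n) (hFn (mem_image_of_mem f hx))⟩

/-- Open perfect preimages of star-K-Scheepers spaces are star-K-Scheepers. -/
theorem starKScheepers_open_perfect_preimage {X Y : Type*} [TopologicalSpace X]
    [TopologicalSpace Y] (f : X → Y) (hcont : Continuous f) (hopen : IsOpenMap f)
    (hclosed : IsClosedMap f) (hfib : ∀ y : Y, IsCompact (f ⁻¹' {y}))
    (hsurj : Function.Surjective f) (hY : StarKScheepers Y) :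
    StarKScheepers X :=
  starKScheepers_open_perfect_preimage_general f hcont hopen hclosed hfib hY
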